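/- Every element obtained from a by finitely many applications of the operations x ↦ x ▷ u and x ↦ x ▷⁻¹ u with u ∈ {a, b, c, d, e, f} lies in the set {x_{p,q,r} : 0 ≤ p ≤ k−1, 0 ≤ q ≤ m−1, 0 ≤ r ≤ n−1}. In particular, the orbit of a under the subgroup of permutations of Q generated by the point symmetries S_a, S_b, S_c, S_d, S_e, S_f has at most k·m·n elements. -/

import Mathlib

/-- A quandle as in the paper: a set with operations `▷` and `▷⁻¹` satisfying
axioms A1, A2, A3. -/
class PaperQuandle (Q : Type*) where
  rhd : Q → Q → Q
  rhdInv : Q → Q → Q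
  fix : ∀ x : Q, rhd x x = x
  inv_rhd : ∀ x y : Q, rhdInv (rhd x y) y = x
  rhd_inv : ∀ x y : Q, rhd (rhdInv x y) y = x
  self_distrib : ∀ x y z : Q, rhd (rhd x y) z = rhd (rhd x z) (rhd y z)

infixl:65 " ▷ " => PaperQuandle.rhd
infixl:65 " ▷⁻¹ " => PaperQuandle.rhdInv

/-- The point symmetry at `u`, as a permutation of `Q`: `x ↦ x ▷ u`,
with inverse `x ↦ x ▷⁻¹ u`. -/
def ptSym {Q : Type*} [PaperQuandle Q] (u : Q) : Equiv.Perm Q where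
  toFun x := x ▷ u
  invFun x := x ▷⁻¹ u
  left_inv x := PaperQuandle.inv_rhd x u
  right_inv x := PaperQuandle.rhd_inv x u

/-- The element `x_{p,q,r} = a^{(ba)^t c^q d^r}` if `p = 2t`, and
`a^{(ba)^t b c^q d^r}` if `p = 2t+1`.  Here the word `ba` (apply `b`, then `a`)
is the permutation `ptSym a * ptSym b`. -/
def X {Q : Type*} [PaperQuandle Q] (a b c d : Q) (p q r : ℤ) : Q :=
  if Even p then
    (ptSym d ^ r) ((ptSym c ^ q) (((ptSym a * ptSym b) ^ (p / 2)) a))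
  else
    (ptSym d ^ r) ((ptSym c ^ q) ((((ptSym a * ptSym b) ^ ((p - 1) / 2)) a) ▷ b))

/-!
Write `A, …, F` for the point symmetries of `a, …, f` and `P = A * B`. The relations say that
`A, B, E, F` are involutions with `A E D = F D B = 1`, so `A` and `B` both invert `D`; hence `P`
commutes with `D`, `A` inverts `P`, and the relation for `c` becomes `C = P ^ k * D⁻¹`. The points
`(P ^ S * D ^ R) • a`, `(S, R) ∈ ℤ²`, therefore form a set permuted by `A, …, F` (`A` acts by
`(S, R) ↦ (-S, -R)` because `a ▷ a = a`), which contains the orbit of `a`. Since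
`C ^ m = D ^ n = 1`, such a point depends only on `(S, R)` modulo the lattice spanned by
`(k m, -m)` and `(0, n)`, while `x_{p,q,r} = (P ^ (s_p + k q) * D ^ (r - q)) • a`, where `s_p`
runs through a complete system of residues mod `k` as `p` runs through `0, …, k - 1`.
-/

open scoped Pointwise
open MulAction Set

section Involutions

variable {G : Type*} [Group G] {A B D : G}

theorem semiconjBy_inv_of_mul_mul_eq_one (hA : A * A = 1) (hB : B * B = 1) (h : A * B * D = 1) :
    SemiconjBy A D D⁻¹ := by
  have hAB : A * B = D⁻¹ := eq_inv_of_mul_eq_one_left h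
  have hD : D = B * A := by
    rw [← inv_inv D, ← hAB, mul_inv_rev, inv_eq_of_mul_eq_one_right hA,
      inv_eq_of_mul_eq_one_right hB]
  calc A * D = A * B * A := by rw [hD, mul_assoc]
    _ = D⁻¹ * A := by rw [hAB]

theorem semiconjBy_mul_inv_of_mul_self (hA : A * A = 1) (hB : B * B = 1) :
    SemiconjBy A (A * B) (A * B)⁻¹ := by
  show A * (A * B) = (A * B)⁻¹ * A
  rw [← mul_assoc, hA, one_mul, mul_inv_rev, mul_assoc, inv_mul_cancel, mul_one,
    inv_eq_of_mul_eq_one_right hB]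

theorem commute_mul_of_semiconjBy_inv (hA : SemiconjBy A D D⁻¹) (hB : SemiconjBy B D D⁻¹) :
    Commute (A * B) D := by
  have h := hA.inv_right.mul_left hB
  rwa [inv_inv] at h

theorem eq_zpow_mul_inv_of_mul_eq_one {C E : G} {k : ℤ} (hA : A * A = 1) (hB : B * B = 1)
    (hE : E * E = 1) (hAED : A * E * D = 1) (h : E * A * (B * A) ^ k * C = 1) :
    C = (A * B) ^ k * D⁻¹ := by
  rw [eq_inv_of_mul_eq_one_right h, mul_inv_rev, ← inv_zpow, mul_inv_rev, mul_inv_rev,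
    inv_eq_of_mul_eq_one_right hA, inv_eq_of_mul_eq_one_right hB,
    inv_eq_of_mul_eq_one_right hE, eq_inv_of_mul_eq_one_left hAED]

end Involutions

theorem Set.ncard_le_card_of_subset_image {β γ : Type*} {s : Set β} {t : Finset γ} {g : γ → β}
    (h : s ⊆ g '' t) : s.ncard ≤ t.card :=
  (ncard_le_ncard h (t.finite_toSet.image g)).trans
    ((ncard_image_le t.finite_toSet).trans_eq (ncard_coe_finset t))

section Lattice

variable {G α : Type*} [Group G] [MulAction G α] {P D : G} {a : α}

variable (P D a) in
def latticePoint (v : ℤ × ℤ) : α := (P ^ v.1 * D ^ v.2) • a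

theorem zpow_mul_zpow_smul_latticePoint (h : Commute P D) (i j : ℤ) (v : ℤ × ℤ) :
    (P ^ i * D ^ j) • latticePoint P D a v = latticePoint P D a (v + (i, j)) := by
  simp only [latticePoint, smul_smul, Prod.fst_add, Prod.snd_add]
  congr 1
  rw [mul_assoc, ← mul_assoc (D ^ j), (h.zpow_zpow v.1 j).eq.symm, mul_assoc, ← mul_assoc,
    ← zpow_add, ← zpow_add, add_comm i, add_comm j]

theorem Commute.mul_inv_zpow (h : Commute P D) (k q : ℤ) :
    (P ^ k * D⁻¹) ^ q = P ^ (k * q) * D ^ (-q) := by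
  rw [((h.zpow_left k).inv_right).mul_zpow, ← zpow_mul, inv_zpow, zpow_neg]

theorem latticePoint_periodic (h : Commute P D) {s t : ℤ} (hst : P ^ s * D ^ t = 1) :
    Function.Periodic (latticePoint P D a) (s, t) := fun v => by
  rw [← zpow_mul_zpow_smul_latticePoint h, hst, one_smul]

theorem smul_latticePoint_of_semiconjBy {A : G} (hP : SemiconjBy A P P⁻¹)
    (hD : SemiconjBy A D D⁻¹) (ha : A • a = a) (v : ℤ × ℤ) :
    A • latticePoint P D a v = latticePoint P D a (-v) := by
  rw [latticePoint, smul_smul, ((hP.zpow_right v.1).mul_right (hD.zpow_right v.2)).eq,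
    mul_smul, ha, latticePoint, Prod.fst_neg, Prod.snd_neg, zpow_neg, zpow_neg, inv_zpow, inv_zpow]

theorem mem_stabilizer_range_of_smul_eq_comp {ι : Type*} {f : ι → α} {g : G} {e : ι → ι}
    (he : Function.Surjective e) (h : ∀ v, g • f v = f (e v)) :
    g ∈ stabilizer G (range f) := by
  rw [mem_stabilizer_iff, smul_set_range, funext h]
  exact he.range_comp f

theorem orbit_subset_of_le_stabilizer {H : Subgroup G} {s : Set α}
    (hH : H ≤ stabilizer G s) (ha : a ∈ s) : orbit H a ⊆ s := by
  rintro _ ⟨g, rfl⟩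
  exact (mem_stabilizer_set.mp (hH g.2) a).mpr ha

theorem zpow_mul_zpow_mem_stabilizer (h : Commute P D) (i j : ℤ) :
    P ^ i * D ^ j ∈ stabilizer G (range (latticePoint P D a)) :=
  mem_stabilizer_range_of_smul_eq_comp (Equiv.addRight (i, j)).surjective
    (zpow_mul_zpow_smul_latticePoint h i j)

theorem closure_le_stabilizer_range_latticePoint {A B C E F : G} {k : ℤ}
    (hAP : SemiconjBy A (A * B) (A * B)⁻¹) (hAD : SemiconjBy A D D⁻¹) (hPD : Commute (A * B) D)
    (hAED : A * E * D = 1) (hFDB : F * D * B = 1) (hC : C = (A * B) ^ k * D⁻¹)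
    (ha : A • a = a) :
    Subgroup.closure {A, B, C, D, E, F} ≤ stabilizer G (range (latticePoint (A * B) D a)) := by
  set K := stabilizer G (range (latticePoint (A * B) D a))
  have hAK : A ∈ K := mem_stabilizer_range_of_smul_eq_comp neg_surjective
    (smul_latticePoint_of_semiconjBy hAP hAD ha)
  have hPK : A * B ∈ K := by
    simpa only [zpow_one, zpow_zero, mul_one] using zpow_mul_zpow_mem_stabilizer (a := a) hPD 1 0
  have hDK : D ∈ K := by
    simpa only [zpow_one, zpow_zero, one_mul] using zpow_mul_zpow_mem_stabilizer (a := a) hPD 0 1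
  have hBK : B ∈ K := by simpa using mul_mem (inv_mem hAK) hPK
  have hE : E = A⁻¹ * D⁻¹ := eq_inv_mul_of_mul_eq (eq_inv_of_mul_eq_one_left hAED)
  have hF : F = B⁻¹ * D⁻¹ := by
    rw [← mul_inv_rev]; exact eq_inv_of_mul_eq_one_left (by rwa [← mul_assoc])
  rw [Subgroup.closure_le]
  rintro g (rfl | rfl | rfl | rfl | rfl | rfl)
  · exact hAK
  · exact hBK
  · rw [hC]; exact mul_mem (zpow_mem hPK k) (inv_mem hDK)
  · exact hDK
  · rw [hE]; exact mul_mem (inv_mem hAK) (inv_mem hDK)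
  · rw [hF]; exact mul_mem (inv_mem hBK) (inv_mem hDK)

end Lattice

-- `x_{p,0,0} = P ^ baExponent p • a` for `P = ptSym a * ptSym b`: `x_{2t} = P ^ t • a` and
-- `x_{2t+1} = ptSym b • P ^ t • a = P ^ (-t - 1) • a`.
def baExponent (p : ℤ) : ℤ := if Even p then p / 2 else -((p - 1) / 2) - 1

theorem exists_baExponent_add_mul {k : ℤ} (hk : 0 < k) (S : ℤ) :
    ∃ p j : ℤ, 0 ≤ p ∧ p < k ∧ S = baExponent p + k * j := by
  have hS := Int.emod_add_mul_ediv S k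
  have h0 := Int.emod_nonneg S hk.ne'
  have h1 := Int.emod_lt_of_pos S hk
  by_cases hu : 2 * (S % k) < k
  · refine ⟨2 * (S % k), S / k, by omega, hu, ?_⟩
    rw [baExponent, if_pos (even_two_mul _)]
    omega
  · have hodd : ¬Even (2 * (k - S % k) - 1) := by
      rw [Int.not_even_iff_odd]; exact ⟨k - S % k - 1, by ring⟩
    refine ⟨2 * (k - S % k) - 1, S / k + 1, by omega, by omega, ?_⟩
    rw [baExponent, if_neg hodd, mul_add]
    omega

theorem exists_eq_add_zsmul_add_zsmul {k m n : ℤ} (hk : 0 < k) (hm : 0 < m) (hn : 0 < n)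
    (v : ℤ × ℤ) :
    ∃ p q r i j : ℤ, 0 ≤ p ∧ p < k ∧ 0 ≤ q ∧ q < m ∧ 0 ≤ r ∧ r < n ∧
      v = (baExponent p + k * q, r - q) + i • (k * m, -m) + j • ((0 : ℤ), n) := by
  obtain ⟨p, J, hp0, hpk, hS⟩ := exists_baExponent_add_mul hk v.1
  have hJ := Int.emod_add_mul_ediv J m
  have hR := Int.emod_add_mul_ediv (v.2 + m * (J / m) + J % m) n
  refine ⟨p, J % m, (v.2 + m * (J / m) + J % m) % n, J / m, (v.2 + m * (J / m) + J % m) / n,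
    hp0, hpk, Int.emod_nonneg J hm.ne', Int.emod_lt_of_pos J hm,
    Int.emod_nonneg _ hn.ne', Int.emod_lt_of_pos _ hn, ?_⟩
  ext
  · simp only [Prod.fst_add, smul_eq_mul, Prod.smul_fst]
    linear_combination hS - k * hJ
  · simp only [Prod.snd_add, smul_eq_mul, Prod.smul_snd]
    linear_combination -hR

theorem exists_eq_baExponent_of_periodic {α : Type*} {f : ℤ × ℤ → α} {k m n : ℤ} (hk : 0 < k)
    (hm : 0 < m) (hn : 0 < n) (h₁ : Function.Periodic f (k * m, -m))
    (h₂ : Function.Periodic f (0, n)) (v : ℤ × ℤ) :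
    ∃ p q r : ℤ, 0 ≤ p ∧ p < k ∧ 0 ≤ q ∧ q < m ∧ 0 ≤ r ∧ r < n ∧
      f v = f (baExponent p + k * q, r - q) := by
  obtain ⟨p, q, r, i, j, hp0, hpk, hq0, hqm, hr0, hrn, rfl⟩ :=
    exists_eq_add_zsmul_add_zsmul hk hm hn v
  exact ⟨p, q, r, hp0, hpk, hq0, hqm, hr0, hrn, by rw [h₂.zsmul j, h₁.zsmul i]⟩

section Quandle

variable {Q : Type*} [PaperQuandle Q]

theorem X_eq_latticePoint {a b c d : Q} {k : ℤ} (hA : ptSym a * ptSym a = 1)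
    (hAP : SemiconjBy (ptSym a) (ptSym a * ptSym b) (ptSym a * ptSym b)⁻¹)
    (hAD : SemiconjBy (ptSym a) (ptSym d) (ptSym d)⁻¹)
    (hPD : Commute (ptSym a * ptSym b) (ptSym d))
    (hC : ptSym c = (ptSym a * ptSym b) ^ k * (ptSym d)⁻¹) (p q r : ℤ) :
    X a b c d p q r =
      latticePoint (ptSym a * ptSym b) (ptSym d) a (baExponent p + k * q, r - q) := by
  set P := ptSym a * ptSym b
  set D := ptSym d
  have hPt (t : ℤ) : (P ^ t) a = latticePoint P D a (t, 0) := by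
    simp [latticePoint, Equiv.Perm.smul_def]
  have hBPt (t : ℤ) : (P ^ t) a ▷ b = latticePoint P D a (-t - 1, 0) := by
    have hB : ptSym b = ptSym a * P := by rw [← mul_assoc, hA, one_mul]
    have hP : P • latticePoint P D a (t, 0) = latticePoint P D a (t + 1, 0) := by
      simpa using zpow_mul_zpow_smul_latticePoint (a := a) hPD 1 0 (t, 0)
    change ptSym b ((P ^ t) a) = _
    rw [hPt, ← Equiv.Perm.smul_def, hB, mul_smul, hP,
      smul_latticePoint_of_semiconjBy hAP hAD (PaperQuandle.fix a)]
    congr 1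
    ext <;> simp only [Prod.fst_neg, Prod.snd_neg] <;> ring
  have hCD (v : ℤ × ℤ) : (D ^ r) ((ptSym c ^ q) (latticePoint P D a v)) =
      latticePoint P D a (v + (k * q, r - q)) := by
    rw [← Equiv.Perm.smul_def, ← Equiv.Perm.smul_def, hC, hPD.mul_inv_zpow,
      zpow_mul_zpow_smul_latticePoint hPD, ← one_mul (D ^ r), ← zpow_zero P,
      zpow_mul_zpow_smul_latticePoint hPD]
    congr 1
    ext <;> simp only [Prod.fst_add, Prod.snd_add] <;> ring
  unfold X baExponent
  split_ifs
  · rw [hPt, hCD]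
    congr 1
    ext <;> simp
  · rw [hBPt, hCD]
    congr 1
    ext <;> simp

theorem rhd_mem_and_rhdInv_mem {L : Set Q} {u x : Q}
    (hu : ptSym u ∈ stabilizer (Equiv.Perm Q) L) (hx : x ∈ L) : x ▷ u ∈ L ∧ x ▷⁻¹ u ∈ L :=
  ⟨(mem_stabilizer_set.mp hu x).mpr hx, (mem_stabilizer_set.mp (inv_mem hu) x).mpr hx⟩

theorem range_latticePoint_subset_image_X {a b c d : Q} {k m n : ℤ} (hk : 0 < k) (hm : 0 < m)
    (hn : 0 < n) (hA : ptSym a * ptSym a = 1)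
    (hAP : SemiconjBy (ptSym a) (ptSym a * ptSym b) (ptSym a * ptSym b)⁻¹)
    (hAD : SemiconjBy (ptSym a) (ptSym d) (ptSym d)⁻¹)
    (hPD : Commute (ptSym a * ptSym b) (ptSym d))
    (hC : ptSym c = (ptSym a * ptSym b) ^ k * (ptSym d)⁻¹) (hCm : ptSym c ^ m = 1)
    (hDn : ptSym d ^ n = 1) :
    range (latticePoint (ptSym a * ptSym b) (ptSym d) a) ⊆
      (fun v : ℤ × ℤ × ℤ => X a b c d v.1 v.2.1 v.2.2) ''
        ↑(Finset.Ico 0 k ×ˢ Finset.Ico 0 m ×ˢ Finset.Ico 0 n) := by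
  have h₁ : Function.Periodic (latticePoint (ptSym a * ptSym b) (ptSym d) a) (k * m, -m) :=
    latticePoint_periodic hPD (by rw [← hPD.mul_inv_zpow, ← hC, hCm])
  have h₂ : Function.Periodic (latticePoint (ptSym a * ptSym b) (ptSym d) a) (0, n) :=
    latticePoint_periodic hPD (by rw [zpow_zero, one_mul, hDn])
  rintro _ ⟨v, rfl⟩
  obtain ⟨p, q, r, hp0, hpk, hq0, hqm, hr0, hrn, hv⟩ :=
    exists_eq_baExponent_of_periodic hk hm hn h₁ h₂ v
  refine ⟨(p, q, r), ?_, (X_eq_latticePoint hA hAP hAD hPD hC p q r).trans hv.symm⟩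
  simp only [Finset.coe_product, Set.mem_prod, Finset.coe_Ico, Set.mem_Ico]
  exact ⟨⟨hp0, hpk⟩, ⟨hq0, hqm⟩, ⟨hr0, hrn⟩⟩

end Quandle

theorem stmt_16_general
    {Q : Type*} [PaperQuandle Q] (k : ℤ) (m n : ℕ) (a b c d e f : Q)
    (hk : 1 ≤ k) (hm : 0 < m) (hn : 0 < n)
    (rel_a : ∀ x : Q, x ▷ a ▷ a = x)
    (rel_b : ∀ x : Q, x ▷ b ▷ b = x)
    (rel_e : ∀ x : Q, x ▷ e ▷ e = x)
    (rel_f : ∀ x : Q, x ▷ f ▷ f = x)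
    (rel_c : ∀ x : Q, (ptSym c ^ m) x = x)
    (rel_d : ∀ x : Q, (ptSym d ^ n) x = x)
    (rel_dea : ∀ x : Q, x ▷ d ▷ e ▷ a = x)
    (rel_bdf : ∀ x : Q, x ▷ b ▷ d ▷ f = x)
    (rel_cke : ∀ x : Q, (((ptSym b * ptSym a) ^ k) (x ▷ c)) ▷ a ▷ e = x) :
    (∀ z : Q,
      (∀ T : Set Q, a ∈ T →
        (∀ x ∈ T, ∀ u ∈ ({a, b, c, d, e, f} : Set Q), x ▷ u ∈ T ∧ x ▷⁻¹ u ∈ T) →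
        z ∈ T) →
      ∃ p q r : ℤ, 0 ≤ p ∧ p ≤ k - 1 ∧ 0 ≤ q ∧ q ≤ (m : ℤ) - 1 ∧
        0 ≤ r ∧ r ≤ (n : ℤ) - 1 ∧ z = X a b c d p q r) ∧
    (MulAction.orbit
      (Subgroup.closure ({ptSym a, ptSym b, ptSym c, ptSym d, ptSym e, ptSym f} :
        Set (Equiv.Perm Q))) a).Finite ∧
    ((MulAction.orbit
      (Subgroup.closure ({ptSym a, ptSym b, ptSym c, ptSym d, ptSym e, ptSym f} :
        Set (Equiv.Perm Q))) a).ncard : ℤ) ≤ k * m * n := by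
  have hA : ptSym a * ptSym a = 1 := Equiv.ext rel_a
  have hB : ptSym b * ptSym b = 1 := Equiv.ext rel_b
  have hE : ptSym e * ptSym e = 1 := Equiv.ext rel_e
  have hAED : ptSym a * ptSym e * ptSym d = 1 := Equiv.ext rel_dea
  have hFDB : ptSym f * ptSym d * ptSym b = 1 := Equiv.ext rel_bdf
  have hAD := semiconjBy_inv_of_mul_mul_eq_one hA hE hAED
  have hBD := semiconjBy_inv_of_mul_mul_eq_one hB (Equiv.ext rel_f)
    (by rw [mul_assoc]; exact mul_eq_one_comm.mp hFDB)
  have hAP := semiconjBy_mul_inv_of_mul_self hA hB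
  have hPD := commute_mul_of_semiconjBy_inv hAD hBD
  have hC := eq_zpow_mul_inv_of_mul_eq_one hA hB hE hAED
    (Equiv.ext rel_cke : ptSym e * ptSym a * (ptSym b * ptSym a) ^ k * ptSym c = 1)
  have hLX := range_latticePoint_subset_image_X (m := m) (n := n) (by omega) (by omega)
    (by omega) hA hAP hAD hPD hC
    (by rw [zpow_natCast]; exact Equiv.ext rel_c) (by rw [zpow_natCast]; exact Equiv.ext rel_d)
  have hstab := closure_le_stabilizer_range_latticePoint hAP hAD hPD hAED hFDB hC
    (PaperQuandle.fix a)
  have haL : a ∈ range (latticePoint (ptSym a * ptSym b) (ptSym d) a) :=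
    ⟨0, by simp [latticePoint]⟩
  have horbit := orbit_subset_of_le_stabilizer hstab haL
  refine ⟨fun z hz => ?_, (Finset.finite_toSet _ |>.image _).subset (horbit.trans hLX), ?_⟩
  · obtain ⟨⟨p, q, r⟩, hmem, rfl⟩ := hLX <| hz _ haL fun x hx u hu =>
      rhd_mem_and_rhdInv_mem (hstab <| Subgroup.subset_closure <| by
        rcases hu with rfl | rfl | rfl | rfl | rfl | rfl <;> simp) hx
    simp only [Finset.coe_product, Set.mem_prod, Finset.coe_Ico, Set.mem_Ico] at hmem
    exact ⟨p, q, r, by omega, by omega, by omega, by omega, by omega, by omega, rfl⟩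
  · calc ((orbit _ a).ncard : ℤ)
        ≤ (Finset.Ico 0 k ×ˢ Finset.Ico 0 (m : ℤ) ×ˢ Finset.Ico 0 (n : ℤ)).card := by
          exact_mod_cast ncard_le_card_of_subset_image (horbit.trans hLX)
      _ = k * m * n := by
          simp only [Finset.card_product, Int.card_Ico, sub_zero, Int.toNat_natCast]
          push_cast [Int.toNat_of_nonneg (by omega : 0 ≤ k)]
          ring

theorem stmt_16
    {Q : Type*} [PaperQuandle Q] (k : ℤ) (m n : ℕ) (a b c d e f : Q)
    (hk : 1 ≤ k) (hm : 0 < m) (hn : 0 < n)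
    (rel_a : ∀ x : Q, x ▷ a ▷ a = x)
    (rel_b : ∀ x : Q, x ▷ b ▷ b = x)
    (rel_e : ∀ x : Q, x ▷ e ▷ e = x)
    (rel_f : ∀ x : Q, x ▷ f ▷ f = x)
    (rel_c : ∀ x : Q, (ptSym c ^ m) x = x)
    (rel_d : ∀ x : Q, (ptSym d ^ n) x = x)
    (rel_dea : ∀ x : Q, x ▷ d ▷ e ▷ a = x)
    (rel_bdf : ∀ x : Q, x ▷ b ▷ d ▷ f = x)
    (rel_cke : ∀ x : Q, (((ptSym b * ptSym a) ^ k) (x ▷ c)) ▷ a ▷ e = x)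
    (rel_fca : ∀ x : Q, (((ptSym b * ptSym a) ^ (k - 1)) (x ▷ f ▷ c)) ▷ a = x) :
    (∀ z : Q,
      (∀ T : Set Q, a ∈ T →
        (∀ x ∈ T, ∀ u ∈ ({a, b, c, d, e, f} : Set Q), x ▷ u ∈ T ∧ x ▷⁻¹ u ∈ T) →
        z ∈ T) →
      ∃ p q r : ℤ, 0 ≤ p ∧ p ≤ k - 1 ∧ 0 ≤ q ∧ q ≤ (m : ℤ) - 1 ∧
        0 ≤ r ∧ r ≤ (n : ℤ) - 1 ∧ z = X a b c d p q r) ∧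
    (MulAction.orbit
      (Subgroup.closure ({ptSym a, ptSym b, ptSym c, ptSym d, ptSym e, ptSym f} :
        Set (Equiv.Perm Q))) a).Finite ∧
    ((MulAction.orbit
      (Subgroup.closure ({ptSym a, ptSym b, ptSym c, ptSym d, ptSym e, ptSym f} :
        Set (Equiv.Perm Q))) a).ncard : ℤ) ≤ k * m * n :=
  stmt_16_general k m n a b c d e f hk hm hn rel_a rel_b rel_e rel_f rel_c rel_d rel_dea rel_bdf
    rel_cke
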